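/- Let K be a class of L-algebras, C a smallest finite subalgebra of F_K(ω), and K' a class of L-algebras such that for all finite sets Σ of equations, Σ is K-unifiable iff Σ is K'-satisfiable. Then |C| ≤ |B| for every B ∈ K'. -/

import Mathlib

/-- An algebraic signature: a type of operation symbols with arities. -/
structure Signature where
  ops : Type
  arity : ops → ℕ

/-- An algebra for a signature `S`. -/
structure Alg (S : Signature) where
  carrier : Type
  interp : ∀ o : S.ops, (Fin (S.arity o) → carrier) → carrier

/-- Terms over a set `X` of variables. -/
inductive Term (S : Signature) (X : Type) : Type where
  | var : X → Term S X
  | op : (o : S.ops) → (Fin (S.arity o) → Term S X) → Term S X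

variable {S : Signature}

/-- Evaluation of a term in an algebra under an assignment of variables. -/
def Term.eval {X : Type} (A : Alg S) (h : X → A.carrier) : Term S X → A.carrier
  | .var x => h x
  | .op o args => A.interp o (fun i => (args i).eval A h)

/-- Application of a substitution to a term. -/
def Term.subst (σ : ℕ → Term S ℕ) : Term S ℕ → Term S ℕ
  | .var x => σ x
  | .op o args => .op o (fun i => (args i).subst σ)

/-- Homomorphisms of algebras. -/
def IsHom (A B : Alg S) (f : A.carrier → B.carrier) : Prop :=
  ∀ (o : S.ops) (args : Fin (S.arity o) → A.carrier),
    f (A.interp o args) = B.interp o (fun i => f (args i))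

/-- Embeddings of algebras: injective homomorphisms. -/
def IsEmbedding (A B : Alg S) (f : A.carrier → B.carrier) : Prop :=
  IsHom A B f ∧ Function.Injective f

/-- `A` embeds into `B` (i.e. `A` is isomorphic to a subalgebra of `B`). -/
def Embeds (A B : Alg S) : Prop := ∃ f, IsEmbedding A B f

/-- Isomorphism of algebras. -/
def Iso (A B : Alg S) : Prop := ∃ f, IsHom A B f ∧ Function.Bijective f

/-- Product of a family of algebras. -/
def ProdAlg {I : Type} (F : I → Alg S) : Alg S where
  carrier := ∀ i, (F i).carrier
  interp o args i := (F i).interp o (fun j => args j i)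

/-- Binary product of algebras. -/
def Alg.prod (A B : Alg S) : Alg S where
  carrier := A.carrier × B.carrier
  interp o args := (A.interp o (fun i => (args i).1), B.interp o (fun i => (args i).2))

/-- `A` is a subdirect product of the family `F`: there is an embedding of `A`
into the product whose composition with each projection is surjective. -/
def IsSubdirectProduct (A : Alg S) {I : Type} (F : I → Alg S) : Prop :=
  ∃ f : A.carrier → (ProdAlg F).carrier,
    IsEmbedding A (ProdAlg F) f ∧ ∀ i, Function.Surjective (fun a => f a i)

/-- An equation: an ordered pair of terms. -/
abbrev Eqn (S : Signature) (X : Type) := Term S X × Term S X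

/-- An equation holds in an algebra. -/
def Alg.SatisfiesEqn {X : Type} (A : Alg S) (e : Eqn S X) : Prop :=
  ∀ h : X → A.carrier, e.1.eval A h = e.2.eval A h

/-- An equation is valid in a class of algebras. -/
def EqValid (K : Set (Alg S)) (e : Eqn S ℕ) : Prop := ∀ A ∈ K, A.SatisfiesEqn e

/-- A quasiequation: finitely many premises and one conclusion. -/
structure Quasieq (S : Signature) where
  prem : List (Eqn S ℕ)
  concl : Eqn S ℕ

/-- A quasiequation holds in an algebra. -/
def Alg.SatisfiesQ (A : Alg S) (q : Quasieq S) : Prop :=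
  ∀ h : ℕ → A.carrier,
    (∀ e ∈ q.prem, e.1.eval A h = e.2.eval A h) →
      q.concl.1.eval A h = q.concl.2.eval A h

/-- The quasivariety generated by `K`: the class axiomatized by all
quasiequations valid in `K`. -/
def QGen (K : Set (Alg S)) : Set (Alg S) :=
  { A | ∀ q : Quasieq S, (∀ B ∈ K, B.SatisfiesQ q) → A.SatisfiesQ q }

/-- The variety generated by `K`: the class axiomatized by all
equations valid in `K`. -/
def VGen (K : Set (Alg S)) : Set (Alg S) :=
  { A | ∀ e : Eqn S ℕ, (∀ B ∈ K, B.SatisfiesEqn e) → A.SatisfiesEqn e }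

/-- A quasivariety is a class axiomatizable by quasiequations. -/
def IsQuasivariety (Q : Set (Alg S)) : Prop := QGen Q = Q

/-- `A` is `Q`-subdirectly irreducible: `A ∈ Q` and for every `Q`-subdirect
representation of `A`, `A` is isomorphic to one of the components. -/
def QSubdirectlyIrreducible (Q : Set (Alg S)) (A : Alg S) : Prop :=
  A ∈ Q ∧ ∀ (I : Type) (F : I → Alg S), (∀ i, F i ∈ Q) →
    IsSubdirectProduct A F → ∃ i, Iso A (F i)

/-- A congruence on an algebra. -/
structure Cong (A : Alg S) where
  r : A.carrier → A.carrier → Prop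
  iseqv : Equivalence r
  compat : ∀ (o : S.ops) (a b : Fin (S.arity o) → A.carrier),
    (∀ i, r (a i) (b i)) → r (A.interp o a) (A.interp o b)

def Cong.setoid {A : Alg S} (θ : Cong A) : Setoid A.carrier := ⟨θ.r, θ.iseqv⟩

/-- Quotient algebra of `A` by a congruence `θ`. -/
noncomputable def QuotAlg (A : Alg S) (θ : Cong A) : Alg S where
  carrier := Quotient θ.setoid
  interp o args := Quotient.mk θ.setoid (A.interp o (fun i => (args i).out))

/-- The term algebra over variables `X`. -/
def TermAlg (S : Signature) (X : Type) : Alg S where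
  carrier := Term S X
  interp := Term.op

/-- The congruence of all identifications valid in `K` on the term algebra:
the intersection of all congruences whose quotient embeds into a member of `K`. -/
def freeCong (K : Set (Alg S)) (X : Type) : Cong (TermAlg S X) where
  r φ ψ := ∀ A ∈ K, ∀ h : X → A.carrier, φ.eval A h = ψ.eval A h
  iseqv := by
    constructor
    · intro φ A hA h; rfl
    · intro φ ψ H A hA h; exact (H A hA h).symm
    · intro a b c H1 H2 A hA h; exact (H1 A hA h).trans (H2 A hA h)
  compat := by
    intro o a b hab A hA h
    show Term.eval A h (Term.op o a) = Term.eval A h (Term.op o b)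
    simp only [Term.eval]
    congr 1
    funext i
    exact hab i A hA h

/-- The free algebra of `K` over variables `X`. -/
noncomputable def FreeAlg (K : Set (Alg S)) (X : Type) : Alg S :=
  QuotAlg (TermAlg S X) (freeCong K X)

/-- `σ` is a `K`-unifier of the finite set of equations `Γ`. -/
def Unifier (K : Set (Alg S)) (σ : ℕ → Term S ℕ) (Γ : List (Eqn S ℕ)) : Prop :=
  ∀ e ∈ Γ, EqValid K (e.1.subst σ, e.2.subst σ)

/-- `Γ` is `K`-unifiable. -/
def Unifiable (K : Set (Alg S)) (Γ : List (Eqn S ℕ)) : Prop := ∃ σ, Unifier K σ Γ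

/-- The quasiequation `Γ ⇒ e` is `K`-admissible: every `K`-unifier of the
premises unifies the conclusion. -/
def Admissible (K : Set (Alg S)) (Γ : List (Eqn S ℕ)) (e : Eqn S ℕ) : Prop :=
  ∀ σ, Unifier K σ Γ → EqValid K (e.1.subst σ, e.2.subst σ)

/-- The quasiequation `Γ ⇒ e` is valid in the class `K` (`Γ ⊨_K e`). -/
def Models (K : Set (Alg S)) (Γ : List (Eqn S ℕ)) (e : Eqn S ℕ) : Prop :=
  ∀ A ∈ K, ∀ h : ℕ → A.carrier,
    (∀ e' ∈ Γ, e'.1.eval A h = e'.2.eval A h) → e.1.eval A h = e.2.eval A h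

/-- `Γ` is satisfiable in the algebra `A`. -/
def SatIn (A : Alg S) (Γ : List (Eqn S ℕ)) : Prop :=
  ∃ h : ℕ → A.carrier, ∀ e ∈ Γ, e.1.eval A h = e.2.eval A h

/-!
Every nonempty algebra in the variety generated by `K`, in particular every nonempty subalgebra
`C` of `F_K(ω)`, satisfies every `K`-unifiable system: instantiate the unifier and then send all
variables to one element. Hence every finite system satisfiable in some `B ∈ K'` is satisfiable
in `C`. For finite `B` and `C`, apply this to the operation tables of `B` restricted to finitely
many operation symbols; since there are only finitely many maps `B → C`, one of them is a
homomorphism. Its image is a finite subalgebra of `F_K(ω)` with at most `|B|` elements.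
-/

theorem Term.eval_subst (A : Alg S) (σ : ℕ → Term S ℕ) (h : ℕ → A.carrier) :
    ∀ t : Term S ℕ, (t.subst σ).eval A h = t.eval A (fun n => (σ n).eval A h)
  | .var _ => rfl
  | .op o args => by
      simp only [Term.subst, Term.eval, Term.eval_subst A σ h (args _)]

theorem IsHom.eval_comp {A B : Alg S} {f : A.carrier → B.carrier} (hf : IsHom A B f)
    {X : Type} (h : X → A.carrier) : ∀ t : Term S X, t.eval B (f ∘ h) = f (t.eval A h)
  | .var _ => rfl
  | .op o args => by
      simp only [Term.eval, hf.eval_comp h (args _), hf o]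

theorem Embeds.trans {A B C : Alg S} : Embeds A B → Embeds B C → Embeds A C
  | ⟨f, hf, hfi⟩, ⟨g, hg, hgi⟩ =>
    ⟨g ∘ f, fun o args => by simp only [Function.comp, hf o, hg o], hgi.comp hfi⟩

noncomputable def FreeAlg.mk (K : Set (Alg S)) (t : Term S ℕ) : (FreeAlg K ℕ).carrier :=
  Quotient.mk (freeCong K ℕ).setoid t

theorem FreeAlg.eval_mk (K : Set (Alg S)) (τ : ℕ → Term S ℕ) :
    ∀ t : Term S ℕ, t.eval (FreeAlg K ℕ) (fun n => FreeAlg.mk K (τ n)) = FreeAlg.mk K (t.subst τ)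
  | .var _ => rfl
  | .op o args => by
      apply Quotient.sound
      exact (freeCong K ℕ).compat o _ _ fun i =>
        Quotient.exact ((Quotient.out_eq _).trans (FreeAlg.eval_mk K τ (args i)))

theorem freeAlg_mem_VGen (K : Set (Alg S)) : FreeAlg K ℕ ∈ VGen K := by
  intro e he h
  obtain ⟨τ, rfl⟩ : ∃ τ : ℕ → Term S ℕ, (fun n => FreeAlg.mk K (τ n)) = h :=
    ⟨fun n => (h n).out, funext fun n => Quotient.out_eq _⟩
  rw [FreeAlg.eval_mk, FreeAlg.eval_mk]
  refine Quotient.sound fun A hA g => ?_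
  simp only [Term.eval_subst]
  exact he A hA _

theorem mem_VGen_of_embeds {K : Set (Alg S)} {A B : Alg S} (hAB : Embeds A B)
    (hB : B ∈ VGen K) : A ∈ VGen K := by
  obtain ⟨f, hf, hfi⟩ := hAB
  intro e he h
  apply hfi
  rw [← hf.eval_comp, ← hf.eval_comp]
  exact hB e he (f ∘ h)

theorem satIn_of_unifiable {K : Set (Alg S)} {A : Alg S} (hA : A ∈ VGen K)
    [Nonempty A.carrier] {Γ : List (Eqn S ℕ)} (hΓ : Unifiable K Γ) : SatIn A Γ := by
  obtain ⟨σ, hσ⟩ := hΓ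
  let a : A.carrier := Classical.arbitrary _
  refine ⟨fun n => (σ n).eval A (fun _ => a), fun e he => ?_⟩
  rw [← Term.eval_subst, ← Term.eval_subst]
  exact hA _ (hσ e he) _

def IsHomOn (A B : Alg S) (O : Set S.ops) (g : A.carrier → B.carrier) : Prop :=
  ∀ o ∈ O, ∀ args : Fin (S.arity o) → A.carrier,
    g (A.interp o args) = B.interp o fun i => g (args i)

theorem exists_isHom_of_forall_finite_isHomOn {A B : Alg S}
    [Finite (A.carrier → B.carrier)]
    (h : ∀ O : Set S.ops, O.Finite → ∃ g, IsHomOn A B O g) : ∃ g, IsHom A B g := by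
  by_contra! hno
  choose bad args hbad using fun g => by simpa only [IsHom, not_forall] using hno g
  obtain ⟨g, hg⟩ := h (Set.range bad) (Set.finite_range bad)
  exact hbad g (hg _ ⟨g, rfl⟩ _)

/-- The operation tables of `A` for the symbols in `O`, element `a` being named by the
variable `ι a`. -/
def Alg.diagram (A : Alg S) (ι : A.carrier → ℕ) (O : Set S.ops) : Set (Eqn S ℕ) :=
  ⋃ o ∈ O, Set.range fun args : Fin (S.arity o) → A.carrier =>
    (.op o (fun i => .var (ι (args i))), .var (ι (A.interp o args)))

theorem Alg.diagram_finite (A : Alg S) [Finite A.carrier] (ι : A.carrier → ℕ)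
    {O : Set S.ops} (hO : O.Finite) : (A.diagram ι O).Finite :=
  hO.biUnion fun _ _ => Set.finite_range _

theorem Alg.diagram_holds (A : Alg S) [Nonempty A.carrier] {ι : A.carrier → ℕ}
    (hι : Function.Injective ι) (O : Set S.ops) :
    ∀ e ∈ A.diagram ι O, e.1.eval A (Function.invFun ι) = e.2.eval A (Function.invFun ι) := by
  intro e he
  obtain ⟨o, -, args, rfl⟩ := Set.mem_iUnion₂.mp he
  simp only [Term.eval, Function.leftInverse_invFun hι _]

theorem isHomOn_of_diagram_holds {A B : Alg S} {ι : A.carrier → ℕ} {O : Set S.ops}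
    {h : ℕ → B.carrier} (H : ∀ e ∈ A.diagram ι O, e.1.eval B h = e.2.eval B h) :
    IsHomOn A B O (h ∘ ι) :=
  fun _ ho args => (H _ (Set.mem_biUnion ho ⟨args, rfl⟩)).symm

theorem exists_isHom_of_satIn {A B : Alg S} [Finite A.carrier] [Finite B.carrier]
    (hsat : ∀ Γ : List (Eqn S ℕ), SatIn A Γ → SatIn B Γ) : ∃ g, IsHom A B g := by
  rcases isEmpty_or_nonempty A.carrier with hA | hA
  · exact ⟨isEmptyElim, fun o args => isEmptyElim (A.interp o args)⟩
  obtain ⟨ι, hι⟩ := Countable.exists_injective_nat A.carrier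
  refine exists_isHom_of_forall_finite_isHomOn fun O hO => ?_
  have hfin := A.diagram_finite ι hO
  obtain ⟨h, hh⟩ := hsat hfin.toFinset.toList
    ⟨Function.invFun ι, by simpa using A.diagram_holds hι O⟩
  exact ⟨h ∘ ι, isHomOn_of_diagram_holds (by simpa using hh)⟩

def IsHom.rangeAlg {A B : Alg S} {g : A.carrier → B.carrier} (hg : IsHom A B g) : Alg S where
  carrier := Set.range g
  interp o args := ⟨B.interp o (fun i => (args i).1), by
    choose a ha using fun i => (args i).2
    exact ⟨A.interp o a, by simp only [hg o, ha]⟩⟩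

theorem IsHom.rangeAlg_embeds {A B : Alg S} {g : A.carrier → B.carrier} (hg : IsHom A B g) :
    Embeds hg.rangeAlg B :=
  ⟨Subtype.val, fun _ _ => rfl, Subtype.val_injective⟩

/-- If `C` is a smallest finite subalgebra of `F_K(ω)` and `K'` is a class such
that `K`-unifiability coincides with `K'`-satisfiability, then `|C| ≤ |B|` for
every `B ∈ K'`. -/
theorem stmt11 {S : Signature} (K : Set (Alg S)) (C : Alg S)
    (hCemb : Embeds C (FreeAlg K ℕ)) (hCfin : Finite C.carrier)
    (hmin : ∀ C' : Alg S, Embeds C' (FreeAlg K ℕ) → Finite C'.carrier →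
      Nat.card C.carrier ≤ Nat.card C'.carrier)
    (K' : Set (Alg S))
    (hK' : ∀ Γ : List (Eqn S ℕ), Unifiable K Γ ↔ ∃ B ∈ K', SatIn B Γ) :
    ∀ B ∈ K', Cardinal.mk C.carrier ≤ Cardinal.mk B.carrier := by
  intro B hB
  rcases finite_or_infinite B.carrier with hBfin | hBinf
  swap
  · exact (Cardinal.lt_aleph0_of_finite _).le.trans (Cardinal.aleph0_le_mk _)
  rcases isEmpty_or_nonempty C.carrier with hC | hC
  · simp
  have hCV : C ∈ VGen K := mem_VGen_of_embeds hCemb (freeAlg_mem_VGen K)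
  obtain ⟨g, hg⟩ : ∃ g, IsHom B C g :=
    exists_isHom_of_satIn fun Γ hΓ => satIn_of_unifiable hCV ((hK' Γ).2 ⟨B, hB, hΓ⟩)
  have hcard : Nat.card C.carrier ≤ Nat.card (Set.range g) :=
    hmin hg.rangeAlg (hg.rangeAlg_embeds.trans hCemb) (inferInstanceAs (Finite (Set.range g)))
  rw [← Nat.cast_card, ← Nat.cast_card]
  exact_mod_cast hcard.trans (Finite.card_range_le g)
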